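/- arXiv:2505.19782 — 6 statements merged into one kernel-verified Lean document; each statement's English description precedes it below -/
import Mathlib

section
/- For every real x with 1/2 < x ≤ 1, one has 1/4 − (1 − x^3)^3/(27 x^3) > 0.05, so the discriminant q(x)^2/4 + p(x)^3/27 of the depressed cubic y^3 + p(x) y + q(x) = 0 with p(x) = (x^3 − 1)/x and q(x) = −1 is strictly positive. -/
/-!
With `t = x ^ 3 > 1 / 8`, the cube `(1 - t) ^ 3` is below `(7 / 8) ^ 3 = 343 / 512`, while
`27 t / 5 > 27 / 40 > 343 / 512`; hence `(1 - t) ^ 3 / (27 t) < 1 / 5`. The discriminant of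
`y ^ 3 + ((x ^ 3 - 1) / x) y - 1` is exactly `1 / 4 - (1 - x ^ 3) ^ 3 / (27 x ^ 3)`.
-/

lemma cardano_discriminant_eq (x : ℝ) :
    (-1 : ℝ) ^ 2 / 4 + ((x ^ 3 - 1) / x) ^ 3 / 27 = 1 / 4 - (1 - x ^ 3) ^ 3 / (27 * x ^ 3) := by
  ring

lemma one_sub_pow_three_div_lt {t : ℝ} (ht : 1 / 8 < t) :
    (1 - t) ^ 3 / (27 * t) < 1 / 5 := by
  have hcube : (1 - t) ^ 3 < (7 / 8) ^ 3 :=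
    Odd.strictMono_pow (by decide) (by linarith : 1 - t < 7 / 8)
  rw [div_lt_iff₀ (by linarith)]
  linarith

theorem stmt_3_general (x : ℝ) (hx : 1 / 2 < x) :
    1 / 4 - (1 - x ^ 3) ^ 3 / (27 * x ^ 3) > 0.05 ∧
    ((-1 : ℝ)) ^ 2 / 4 + ((x ^ 3 - 1) / x) ^ 3 / 27 > 0 := by
  have hcube : (1 / 2 : ℝ) ^ 3 < x ^ 3 := pow_lt_pow_left₀ hx (by norm_num) (by norm_num)
  have hbound := one_sub_pow_three_div_lt (by linarith : 1 / 8 < x ^ 3)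
  have hgap : 1 / 4 - (1 - x ^ 3) ^ 3 / (27 * x ^ 3) > 0.05 := by norm_num; linarith
  refine ⟨hgap, ?_⟩
  rw [cardano_discriminant_eq]
  norm_num at hgap ⊢
  linarith

theorem stmt_3 (x : ℝ) (hx : 1 / 2 < x) (hx1 : x ≤ 1) :
    1 / 4 - (1 - x ^ 3) ^ 3 / (27 * x ^ 3) > 0.05 ∧
    ((-1 : ℝ)) ^ 2 / 4 + ((x ^ 3 - 1) / x) ^ 3 / 27 > 0 :=
  stmt_3_general x hx
end

section
/- Let a_1, a_2, a_3 ∈ ℂ be pairwise distinct with a_1 ≠ 0, and suppose there exist a, b ∈ ℝ, with a > 0, real intensities ξ_1, ξ_2, ξ_3 ≠ 0, a constant c_α ∈ ℝ, and α ∈ (0,3), α ≠ 2, such that for every j, i·c_α·Σ_{k≠j} ξ_k |a_j − a_k|^(α−2)/(a_j − a_k) = conj(a_j)(a − i b). Define, for t > 0, Z(t) = ((4−α)·a·t)^(1/(4−α)) · exp(i(θ_0 + (b/((4−α)a))·log t)) for a fixed θ_0 ∈ ℝ, and set w_j(t) = a_j Z(t). Then for all t > 0 and each j, the derivative of the complex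 conjugate of w_j satisfies d/dt conj(w_j(t)) = i·c_α·Σ_{k≠j} ξ_k |w_j(t) − w_k(t)|^(α−2)/(w_j(t) − w_k(t)). -/
open Complex Finset
open ComplexConjugate

/-!
Scaling every vortex by the same `Z ≠ 0` multiplies the gSQG velocity sum by
`‖Z‖ ^ (α - 2) / Z = conj Z * ‖Z‖ ^ (α - 4)`, so the self-similar relation turns the right-hand
side for `w_j = a_j Z` into `conj (a_j) * conj Z * ‖Z‖ ^ (α - 4) * (a - I b)`. On the other hand
`conj Z(t) = exp (log ((4 - α) a t) / (4 - α) - I θ(t))`, and differentiating the exponent gives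
exactly `d/dt conj Z = conj Z * ‖Z‖ ^ (α - 4) * (a - I b)`.
-/

/-- The right-hand side of `d/dt conj z_j` in the generalized SQG point-vortex system. -/
noncomputable def sqgConjVelocity {ι : Type*} [Fintype ι] [DecidableEq ι] (cα α : ℝ) (ξ : ι → ℝ)
    (z : ι → ℂ) (j : ι) : ℂ :=
  I * cα * ∑ k ∈ univ.erase j, (ξ k : ℂ) * ((‖z j - z k‖ ^ (α - 2) : ℝ) : ℂ) / (z j - z k)

theorem sqgConjVelocity_mul_const {ι : Type*} [Fintype ι] [DecidableEq ι] (cα α : ℝ)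
    (ξ : ι → ℝ) (z : ι → ℂ) (Z : ℂ) (j : ι) :
    sqgConjVelocity cα α ξ (fun k => z k * Z) j
      = sqgConjVelocity cα α ξ z j * (((‖Z‖ ^ (α - 2) : ℝ) : ℂ) / Z) := by
  unfold sqgConjVelocity
  rw [mul_assoc (I * _), sum_mul]
  congr 1
  refine sum_congr rfl fun k _ => ?_
  rw [← sub_mul, norm_mul, Real.mul_rpow (norm_nonneg _) (norm_nonneg _), ofReal_mul,
    ← mul_div_mul_comm, mul_assoc]

theorem ofReal_norm_rpow_add_two_div (z : ℂ) (e : ℝ) (hz : z ≠ 0) :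
    ((‖z‖ ^ (e + 2) : ℝ) : ℂ) / z = conj z * ((‖z‖ ^ e : ℝ) : ℂ) := by
  rw [Real.rpow_add (norm_pos_iff.mpr hz), Real.rpow_two, ofReal_mul, ← normSq_eq_norm_sq,
    ← mul_conj, mul_left_comm, mul_div_cancel_left₀ _ hz, mul_comm]

/-- The burst profile `Z(t)` of the paper, written with `p = 4 - α`. -/
noncomputable def burstProfile (p a b θ₀ t : ℝ) : ℂ :=
  (((p * a * t) ^ (1 / p) : ℝ) : ℂ) * exp (((θ₀ + b / (p * a) * Real.log t : ℝ) : ℂ) * I)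

theorem conj_burstProfile {p a t : ℝ} (b θ₀ : ℝ) (hpat : 0 < p * a * t) :
    conj (burstProfile p a b θ₀ t)
      = exp ((Real.log (p * a * t) / p : ℝ) - ((θ₀ + b / (p * a) * Real.log t : ℝ) : ℂ) * I) := by
  rw [burstProfile, Real.rpow_def_of_pos hpat, map_mul, ← exp_conj, conj_ofReal, ofReal_exp,
    ← Complex.exp_add, map_mul, conj_ofReal, conj_I, mul_neg, ← sub_eq_add_neg, mul_one_div]

theorem norm_burstProfile {p a t : ℝ} (b θ₀ : ℝ) (hpat : 0 < p * a * t) :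
    ‖burstProfile p a b θ₀ t‖ = (p * a * t) ^ (1 / p) := by
  rw [burstProfile, norm_mul, norm_exp_ofReal_mul_I, mul_one, norm_real, Real.norm_eq_abs,
    abs_of_pos (Real.rpow_pos_of_pos hpat _)]

theorem hasDerivAt_conj_burstProfile {p a t : ℝ} (b θ₀ : ℝ) (hp : 0 < p) (ha : 0 < a)
    (ht : 0 < t) :
    HasDerivAt (fun s => conj (burstProfile p a b θ₀ s))
      (conj (burstProfile p a b θ₀ t) * ((‖burstProfile p a b θ₀ t‖ ^ (-p) : ℝ) : ℂ)
        * (a - I * b)) t := by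
  have hpa : 0 < p * a := mul_pos hp ha
  have hlog : HasDerivAt (fun s => Real.log (p * a * s) / p) (p * a / (p * a * t) / p) t :=
    (((hasDerivAt_id t).const_mul (p * a)).log (by positivity)).div_const p |>.congr_deriv
      (by simp)
  have hphase : HasDerivAt (fun s => θ₀ + b / (p * a) * Real.log s) (b / (p * a) * t⁻¹) t :=
    ((Real.hasDerivAt_log ht.ne').const_mul _).const_add θ₀
  have hconj : (fun s => exp ((Real.log (p * a * s) / p : ℝ)
      - ((θ₀ + b / (p * a) * Real.log s : ℝ) : ℂ) * I)) =ᶠ[nhds t]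
      fun s => conj (burstProfile p a b θ₀ s) := by
    filter_upwards [Ioi_mem_nhds ht] with s hs
    rw [conj_burstProfile b θ₀ (mul_pos hpa hs)]
  refine ((hlog.ofReal_comp.sub (hphase.ofReal_comp.mul_const I)).cexp.congr_of_eventuallyEq
    hconj.symm).congr_deriv ?_
  simp only [Pi.sub_apply]
  rw [← conj_burstProfile b θ₀ (mul_pos hpa ht), norm_burstProfile b θ₀ (mul_pos hpa ht),
    ← Real.rpow_mul (mul_pos hpa ht).le, one_div_mul_eq_div, neg_div, div_self hp.ne',
    Real.rpow_neg_one]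
  push_cast
  field_simp

theorem stmt_6_general
    (av : Fin 3 → ℂ)
    (a b : ℝ) (ha : 0 < a)
    (ξ : Fin 3 → ℝ)
    (cα : ℝ) (α : ℝ) (hα : α ∈ Set.Ioo (0:ℝ) 3)
    (hss : ∀ j : Fin 3,
      Complex.I * cα * ∑ k ∈ Finset.univ.erase j,
        (ξ k : ℂ) * ((‖av j - av k‖ ^ (α - 2) : ℝ) : ℂ) / (av j - av k)
      = starRingEnd ℂ (av j) * ((a : ℂ) - Complex.I * b))
    (θ₀ : ℝ)
    (Z : ℝ → ℂ)
    (hZ : ∀ t > (0:ℝ), Z t = (((4 - α) * a * t) ^ ((1:ℝ) / (4 - α)) : ℝ) *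
      Complex.exp (Complex.I * (θ₀ + (b / ((4 - α) * a)) * Real.log t)))
    (w : Fin 3 → ℝ → ℂ) (hw : ∀ j t, w j t = av j * Z t) :
    ∀ t > (0:ℝ), ∀ j : Fin 3,
      HasDerivAt (fun s => starRingEnd ℂ (w j s))
        (Complex.I * cα * ∑ k ∈ Finset.univ.erase j,
          (ξ k : ℂ) * ((‖w j t - w k t‖ ^ (α - 2) : ℝ) : ℂ) / (w j t - w k t)) t := by
  intro t ht j
  obtain rfl : w = fun j s => av j * Z s := funext fun j => funext (hw j)
  have hp : 0 < 4 - α := by linarith [hα.2]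
  have hZ_eq : ∀ s > 0, Z s = burstProfile (4 - α) a b θ₀ s := fun s hs => by
    rw [hZ s hs, burstProfile]
    push_cast
    ring_nf
  have hZ_ne : Z t ≠ 0 := by
    rw [hZ_eq t ht, burstProfile]
    exact mul_ne_zero (ofReal_ne_zero.mpr (Real.rpow_pos_of_pos (by positivity) _).ne')
      (exp_ne_zero _)
  have hderiv : HasDerivAt (fun s => conj (Z s))
      (conj (Z t) * ((‖Z t‖ ^ (α - 4) : ℝ) : ℂ) * (a - I * b)) t := by
    have h := hasDerivAt_conj_burstProfile b θ₀ hp ha ht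
    rw [neg_sub, ← hZ_eq t ht] at h
    refine h.congr_of_eventuallyEq ?_
    filter_upwards [Ioi_mem_nhds ht] with s hs
    rw [hZ_eq s hs]
  have hvel : sqgConjVelocity cα α ξ av j = conj (av j) * (a - I * b) := hss j
  change HasDerivAt (fun s => conj (av j * Z s))
    (sqgConjVelocity cα α ξ (fun k => av k * Z t) j) t
  rw [sqgConjVelocity_mul_const, hvel, show α - 2 = α - 4 + 2 by ring,
    ofReal_norm_rpow_add_two_div _ _ hZ_ne]
  simp only [map_mul]
  exact (hderiv.const_mul (conj (av j))).congr_deriv (by ring)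

theorem stmt_6 (a₁ a₂ a₃ : ℂ) (hne : a₁ ≠ a₂ ∧ a₂ ≠ a₃ ∧ a₁ ≠ a₃) (ha₁ : a₁ ≠ 0)
    (av : Fin 3 → ℂ) (hav : av = ![a₁, a₂, a₃])
    (a b : ℝ) (ha : 0 < a)
    (ξ : Fin 3 → ℝ) (hξ : ∀ j, ξ j ≠ 0)
    (cα : ℝ) (α : ℝ) (hα : α ∈ Set.Ioo (0:ℝ) 3) (hα2 : α ≠ 2)
    (hss : ∀ j : Fin 3,
      Complex.I * cα * ∑ k ∈ Finset.univ.erase j,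
        (ξ k : ℂ) * ((‖av j - av k‖ ^ (α - 2) : ℝ) : ℂ) / (av j - av k)
      = starRingEnd ℂ (av j) * ((a : ℂ) - Complex.I * b))
    (θ₀ : ℝ)
    (Z : ℝ → ℂ)
    (hZ : ∀ t > (0:ℝ), Z t = (((4 - α) * a * t) ^ ((1:ℝ) / (4 - α)) : ℝ) *
      Complex.exp (Complex.I * (θ₀ + (b / ((4 - α) * a)) * Real.log t)))
    (w : Fin 3 → ℝ → ℂ) (hw : ∀ j t, w j t = av j * Z t) :
    ∀ t > (0:ℝ), ∀ j : Fin 3,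
      HasDerivAt (fun s => starRingEnd ℂ (w j s))
        (Complex.I * cα * ∑ k ∈ Finset.univ.erase j,
          (ξ k : ℂ) * ((‖w j t - w k t‖ ^ (α - 2) : ℝ) : ℂ) / (w j t - w k t)) t :=
  stmt_6_general av a b ha ξ cα α hα hss θ₀ Z hZ w hw
end

section
/- Let z: I → ℂ^N \ Δ^N be a solution of the gSQG point-vortex system d/dt conj(z_j) = i c_α Σ_{k≠j} ξ_k |z_j − z_k|^(α−2)/(z_j − z_k), with c_α real. Then the moment of inertia L(t) = Σ_{j≠k} ξ_j ξ_k |z_j(t) − z_k(t)|^2 is constant in time. -/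
open Complex Finset

/-- Swap the roles of the two indices in a sum over off-diagonal pairs. -/
lemma pair_swap_aux {N : ℕ} (f : Fin N → Fin N → ℝ) :
    ∑ j, ∑ k ∈ Finset.univ.erase j, f j k = ∑ j, ∑ k ∈ Finset.univ.erase j, f k j := by
  refine Finset.sum_comm' ?_
  intro x y
  simp [Finset.mem_erase, ne_comm]

/-- The key algebraic cancellation: the triple sum of imaginary parts vanishes. -/
lemma triple_sum_aux {N : ℕ} (ξ : Fin N → ℝ) (ζ : Fin N → ℂ) (g : Fin N → Fin N → ℝ)
    (hg : ∀ j k, g j k = g k j)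
    (hζ : ∀ j k, j ≠ k → ζ j ≠ ζ k) :
    ∑ j, ∑ k ∈ Finset.univ.erase j, ∑ l ∈ Finset.univ.erase j,
      ξ j * ξ k * ξ l * (((g j l : ℝ) : ℂ) * (ζ j - ζ k) / (ζ j - ζ l)).im = 0 := by
  classical
  -- remove the diagonal l = k term (it is zero)
  have hstep : ∀ j, ∀ k ∈ Finset.univ.erase j,
      ∑ l ∈ Finset.univ.erase j, ξ j * ξ k * ξ l * (((g j l : ℝ) : ℂ) * (ζ j - ζ k) / (ζ j - ζ l)).im
      = ∑ l ∈ (Finset.univ.erase j).erase k,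
          ξ j * ξ k * ξ l * (((g j l : ℝ) : ℂ) * (ζ j - ζ k) / (ζ j - ζ l)).im := by
    intro j k hk
    rw [← Finset.sum_erase_add _ _ hk]
    have hjk : ζ j - ζ k ≠ 0 :=
      sub_ne_zero.2 (hζ j k (by simpa [Finset.mem_erase, eq_comm] using hk))
    rw [mul_div_assoc, div_self hjk, mul_one]
    simp
  rw [Finset.sum_congr rfl fun j _ => Finset.sum_congr rfl fun k hk => hstep j k hk]
  -- rewrite as a sum over triples
  set q : Fin N → Fin N → Fin N → ℝ :=
    fun j k l => ξ j * ξ k * ξ l * (((g j l : ℝ) : ℂ) * (ζ j - ζ k) / (ζ j - ζ l)).im with hq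
  set f : Fin N × Fin N × Fin N → ℝ :=
    fun p => if p.2.1 ≠ p.1 ∧ p.2.2 ≠ p.1 ∧ p.2.2 ≠ p.2.1 then q p.1 p.2.1 p.2.2 else 0 with hf
  have hconv : ∑ j, ∑ k ∈ Finset.univ.erase j, ∑ l ∈ (Finset.univ.erase j).erase k, q j k l
      = ∑ p : Fin N × Fin N × Fin N, f p := by
    rw [Fintype.sum_prod_type]
    refine Finset.sum_congr rfl fun j _ => ?_
    rw [Fintype.sum_prod_type]
    rw [show ∑ k ∈ Finset.univ.erase j, ∑ l ∈ (Finset.univ.erase j).erase k, q j k l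
        = ∑ k : Fin N, if k ∈ Finset.univ.erase j then
            ∑ l : Fin N, (if l ∈ (Finset.univ.erase j).erase k then q j k l else 0) else 0 from ?_]
    · refine Finset.sum_congr rfl fun k _ => ?_
      by_cases h1 : k = j
      · simp [hf, h1]
      · rw [if_pos (by simp [Finset.mem_erase, h1])]
        refine Finset.sum_congr rfl fun l _ => ?_
        by_cases h2 : l = j <;> by_cases h3 : l = k <;>
          simp [hf, h1, h2, h3, Finset.mem_erase]
    · rw [← Finset.sum_filter, Finset.filter_mem_eq_inter, Finset.univ_inter]
      refine Finset.sum_congr rfl fun k _ => ?_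
      rw [← Finset.sum_filter, Finset.filter_mem_eq_inter, Finset.univ_inter]
  rw [hconv]
  -- now use the involution (j,k,l) ↦ (l,k,j)
  refine Finset.sum_ninvolution (fun p => (p.2.2, p.2.1, p.1)) ?_ ?_ (fun _ => Finset.mem_univ _) ?_
  · rintro ⟨j, k, l⟩
    by_cases hc : k ≠ j ∧ l ≠ j ∧ l ≠ k
    · obtain ⟨h1, h2, h3⟩ := hc
      show (if k ≠ j ∧ l ≠ j ∧ l ≠ k then q j k l else 0)
          + (if k ≠ l ∧ j ≠ l ∧ j ≠ k then q l k j else 0) = 0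
      rw [if_pos ⟨h1, h2, h3⟩, if_pos ⟨h3.symm, h2.symm, h1.symm⟩, hq]
      have hjl : ζ j - ζ l ≠ 0 := sub_ne_zero.2 (hζ j l h2.symm)
      have hlj : ζ l - ζ j ≠ 0 := sub_ne_zero.2 (hζ l j h2)
      have hkey : ((g j l : ℝ) : ℂ) * (ζ j - ζ k) / (ζ j - ζ l)
          + ((g l j : ℝ) : ℂ) * (ζ l - ζ k) / (ζ l - ζ j) = ((g j l : ℝ) : ℂ) := by
        rw [hg l j]
        field_simp
        ring
      have him : (((g j l : ℝ) : ℂ) * (ζ j - ζ k) / (ζ j - ζ l)).im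
          + (((g l j : ℝ) : ℂ) * (ζ l - ζ k) / (ζ l - ζ j)).im = 0 := by
        rw [← Complex.add_im, hkey, Complex.ofReal_im]
      dsimp only
      linear_combination (ξ j * ξ k * ξ l) * him
    · have hc' : ¬ (k ≠ l ∧ j ≠ l ∧ j ≠ k) := by tauto
      show (if k ≠ j ∧ l ≠ j ∧ l ≠ k then q j k l else 0)
          + (if k ≠ l ∧ j ≠ l ∧ j ≠ k then q l k j else 0) = 0
      rw [if_neg hc, if_neg hc', add_zero]
  · rintro ⟨j, k, l⟩ hne heq
    apply hne
    have h1 : l = j := congrArg Prod.fst heq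
    show (if k ≠ j ∧ l ≠ j ∧ l ≠ k then q j k l else 0) = 0
    rw [if_neg (by simp [h1])]
  · rintro ⟨j, k, l⟩; rfl

/-- The real part of the derivative expression vanishes. -/
lemma core_aux {N : ℕ} (cα : ℝ) (ξ : Fin N → ℝ) (ζ : Fin N → ℂ) (g : Fin N → Fin N → ℝ)
    (hg : ∀ j k, g j k = g k j)
    (hζ : ∀ j k, j ≠ k → ζ j ≠ ζ k)
    (w : Fin N → ℂ)
    (hw : ∀ j, w j = Complex.I * cα * ∑ k ∈ Finset.univ.erase j,
        (ξ k : ℂ) * ((g j k : ℝ) : ℂ) / (ζ j - ζ k)) :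
    (∑ j, ∑ k ∈ Finset.univ.erase j, ((ξ j * ξ k : ℝ) : ℂ) *
      ((starRingEnd ℂ (w j) - starRingEnd ℂ (w k)) *
        (starRingEnd ℂ (ζ j) - starRingEnd ℂ (ζ k))
        + (ζ j - ζ k) * (w j - w k))).re = 0 := by
  classical
  have hterm : ∀ j k : Fin N, (((ξ j * ξ k : ℝ) : ℂ) *
      ((starRingEnd ℂ (w j) - starRingEnd ℂ (w k)) *
        (starRingEnd ℂ (ζ j) - starRingEnd ℂ (ζ k))
        + (ζ j - ζ k) * (w j - w k))).re
      = 2 * (ξ j * ξ k * ((ζ j - ζ k) * w j).re)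
        + 2 * (ξ j * ξ k * ((ζ k - ζ j) * w k).re) := by
    intro j k
    have h1 : ((ξ j * ξ k : ℝ) : ℂ) *
        ((starRingEnd ℂ (w j) - starRingEnd ℂ (w k)) *
          (starRingEnd ℂ (ζ j) - starRingEnd ℂ (ζ k))
          + (ζ j - ζ k) * (w j - w k))
        = ((ξ j * ξ k * (2 * ((ζ j - ζ k) * (w j - w k)).re) : ℝ) : ℂ) := by
      have h2 : (starRingEnd ℂ (w j) - starRingEnd ℂ (w k)) *
          (starRingEnd ℂ (ζ j) - starRingEnd ℂ (ζ k))
          = starRingEnd ℂ ((ζ j - ζ k) * (w j - w k)) := by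
        rw [map_mul, map_sub, map_sub]; ring
      rw [h2, add_comm, Complex.add_conj]
      push_cast
      ring
    rw [h1, Complex.ofReal_re]
    have hsplit : (ζ j - ζ k) * (w j - w k) = (ζ j - ζ k) * w j + (ζ k - ζ j) * w k := by ring
    rw [hsplit, Complex.add_re]
    ring
  simp only [Complex.re_sum]
  rw [Finset.sum_congr rfl fun j _ => Finset.sum_congr rfl fun k _ => hterm j k]
  rw [Finset.sum_congr rfl fun j _ => Finset.sum_add_distrib, Finset.sum_add_distrib]
  -- main cancellation: S₁ = 0
  have hS : ∑ j, ∑ k ∈ Finset.univ.erase j, ξ j * ξ k * ((ζ j - ζ k) * w j).re = 0 := by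
    have hrw : ∀ j : Fin N, ∀ k ∈ Finset.univ.erase j, ξ j * ξ k * ((ζ j - ζ k) * w j).re
        = -cα * ∑ l ∈ Finset.univ.erase j,
            ξ j * ξ k * ξ l * (((g j l : ℝ) : ℂ) * (ζ j - ζ k) / (ζ j - ζ l)).im := by
      intro j k _
      rw [hw j]
      have e1 : (ζ j - ζ k) * (Complex.I * (cα : ℂ) * ∑ l ∈ Finset.univ.erase j,
          (ξ l : ℂ) * ((g j l : ℝ) : ℂ) / (ζ j - ζ l))
          = Complex.I * ((cα : ℂ) * ∑ l ∈ Finset.univ.erase j,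
              (ξ l : ℂ) * (((g j l : ℝ) : ℂ) * (ζ j - ζ k) / (ζ j - ζ l))) := by
        have h3 : ∑ l ∈ Finset.univ.erase j,
            (ξ l : ℂ) * (((g j l : ℝ) : ℂ) * (ζ j - ζ k) / (ζ j - ζ l))
            = (ζ j - ζ k) * ∑ l ∈ Finset.univ.erase j,
                (ξ l : ℂ) * ((g j l : ℝ) : ℂ) / (ζ j - ζ l) := by
          rw [Finset.mul_sum]
          exact Finset.sum_congr rfl fun l _ => by ring
        rw [h3]; ring
      rw [e1, Complex.I_mul_re]
      have e2 : ((cα : ℂ) * ∑ l ∈ Finset.univ.erase j,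
          (ξ l : ℂ) * (((g j l : ℝ) : ℂ) * (ζ j - ζ k) / (ζ j - ζ l))).im
          = cα * ∑ l ∈ Finset.univ.erase j,
              ξ l * (((g j l : ℝ) : ℂ) * (ζ j - ζ k) / (ζ j - ζ l)).im := by
        simp only [Complex.mul_im, Complex.ofReal_re, Complex.ofReal_im, zero_mul, add_zero,
          Complex.im_sum]
      rw [e2]
      have hsum : ∑ l ∈ Finset.univ.erase j,
          ξ j * ξ k * ξ l * (((g j l : ℝ) : ℂ) * (ζ j - ζ k) / (ζ j - ζ l)).im
          = ξ j * ξ k * ∑ l ∈ Finset.univ.erase j,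
              ξ l * (((g j l : ℝ) : ℂ) * (ζ j - ζ k) / (ζ j - ζ l)).im := by
        rw [Finset.mul_sum]
        exact Finset.sum_congr rfl fun l _ => by ring
      rw [hsum]
      ring
    rw [Finset.sum_congr rfl fun j _ => Finset.sum_congr rfl fun k hk => hrw j k hk]
    simp only [← Finset.mul_sum]
    rw [triple_sum_aux ξ ζ g hg hζ, mul_zero]
  have hA : ∑ j, ∑ k ∈ Finset.univ.erase j, 2 * (ξ j * ξ k * ((ζ j - ζ k) * w j).re) = 0 := by
    simp only [← Finset.mul_sum]
    rw [hS, mul_zero]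
  have hB : ∑ j, ∑ k ∈ Finset.univ.erase j, 2 * (ξ j * ξ k * ((ζ k - ζ j) * w k).re) = 0 := by
    rw [pair_swap_aux (fun j k => 2 * (ξ j * ξ k * ((ζ k - ζ j) * w k).re))]
    have : ∀ j : Fin N, ∀ k ∈ Finset.univ.erase j,
        2 * (ξ k * ξ j * ((ζ j - ζ k) * w j).re) = 2 * (ξ j * ξ k * ((ζ j - ζ k) * w j).re) := by
      intro j k _; ring
    rw [Finset.sum_congr rfl fun j _ => Finset.sum_congr rfl fun k hk => this j k hk]
    exact hA
  rw [hA, hB, add_zero]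

theorem stmt_12 (N : ℕ) (t₀ t₁ : ℝ) (α cα : ℝ) (hα : α ∈ Set.Ioo (0:ℝ) 3) (hα2 : α ≠ 2)
    (ξ : Fin N → ℝ) (hξ : ∀ j, ξ j ≠ 0)
    (z : ℝ → Fin N → ℂ)
    (hdist : ∀ t ∈ Set.Ioo t₀ t₁, ∀ j k : Fin N, j ≠ k → z t j ≠ z t k)
    (hz : ∀ t ∈ Set.Ioo t₀ t₁, ∀ j : Fin N,
      HasDerivAt (fun s => starRingEnd ℂ (z s j))
        (Complex.I * cα * ∑ k ∈ Finset.univ.erase j,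
          (ξ k : ℂ) * ((‖z t j - z t k‖ ^ (α - 2) : ℝ) : ℂ) / (z t j - z t k)) t) :
    ∀ t ∈ Set.Ioo t₀ t₁, ∀ s ∈ Set.Ioo t₀ t₁,
      ∑ j : Fin N, ∑ k ∈ Finset.univ.erase j,
        ξ j * ξ k * ‖z t j - z t k‖ ^ 2
      = ∑ j : Fin N, ∑ k ∈ Finset.univ.erase j,
        ξ j * ξ k * ‖z s j - z s k‖ ^ 2 := by
  classical
  set L : ℝ → ℝ := fun u => ∑ j : Fin N, ∑ k ∈ Finset.univ.erase j,
    ξ j * ξ k * ‖z u j - z u k‖ ^ 2 with hLdef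
  have key : ∀ u ∈ Set.Ioo t₀ t₁, HasDerivAt L 0 u := by
    intro u hu
    set w : Fin N → ℂ := fun j => Complex.I * cα * ∑ k ∈ Finset.univ.erase j,
      (ξ k : ℂ) * ((‖z u j - z u k‖ ^ (α - 2) : ℝ) : ℂ) / (z u j - z u k) with hwdef
    have hconj : ∀ j, HasDerivAt (fun s => starRingEnd ℂ (z s j)) (w j) u := fun j => hz u hu j
    have hzd : ∀ j, HasDerivAt (fun s => z s j) (starRingEnd ℂ (w j)) u := by
      intro j
      have := (hconj j).star
      simpa using this
    set F : ℝ → ℂ := fun v => ∑ j : Fin N, ∑ k ∈ Finset.univ.erase j,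
      ((ξ j * ξ k : ℝ) : ℂ) * ((z v j - z v k) * (starRingEnd ℂ (z v j) - starRingEnd ℂ (z v k)))
      with hFdef
    set D : ℂ := ∑ j : Fin N, ∑ k ∈ Finset.univ.erase j, ((ξ j * ξ k : ℝ) : ℂ) *
      ((starRingEnd ℂ (w j) - starRingEnd ℂ (w k)) *
        (starRingEnd ℂ (z u j) - starRingEnd ℂ (z u k))
        + (z u j - z u k) * (w j - w k)) with hDdef
    have hF : HasDerivAt F D u := by
      rw [hFdef, hDdef]
      apply HasDerivAt.fun_sum
      intro j _
      apply HasDerivAt.fun_sum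
      intro k _
      have h1 := ((hzd j).sub (hzd k)).mul ((hconj j).sub (hconj k))
      have h2 := h1.const_mul ((ξ j * ξ k : ℝ) : ℂ)
      exact h2
    have hDre : D.re = 0 := by
      rw [hDdef]
      have hgsym : ∀ j k : Fin N, ‖z u j - z u k‖ ^ (α - 2)
          = ‖z u k - z u j‖ ^ (α - 2) := by
        intro j k
        rw [norm_sub_rev]
      exact core_aux cα ξ (z u) (fun j k => ‖z u j - z u k‖ ^ (α - 2)) hgsym
        (hdist u hu) w (fun j => rfl)
    have hLF : L = fun v => (F v).re := by
      funext v
      rw [hLdef, hFdef]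
      rw [Complex.re_sum]
      refine Finset.sum_congr rfl fun j _ => ?_
      rw [Complex.re_sum]
      refine Finset.sum_congr rfl fun k _ => ?_
      have : (z v j - z v k) * (starRingEnd ℂ (z v j) - starRingEnd ℂ (z v k))
          = ((‖z v j - z v k‖ ^ 2 : ℝ) : ℂ) := by
        rw [show starRingEnd ℂ (z v j) - starRingEnd ℂ (z v k)
            = starRingEnd ℂ (z v j - z v k) from (map_sub _ _ _).symm]
        rw [Complex.mul_conj, Complex.sq_norm]
      rw [this, ← Complex.ofReal_mul, Complex.ofReal_re]
    have hre : HasDerivAt (fun v => (F v).re) D.re u :=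
      Complex.reCLM.hasFDerivAt.comp_hasDerivAt u hF
    rw [hLF]
    rw [← hDre] at *
    exact hre
  have const : ∀ a ∈ Set.Ioo t₀ t₁, ∀ b ∈ Set.Ioo t₀ t₁, a ≤ b → L b = L a := by
    intro a ha b hb hab
    have hsub : Set.Icc a b ⊆ Set.Ioo t₀ t₁ := fun x hx =>
      ⟨lt_of_lt_of_le ha.1 hx.1, lt_of_le_of_lt hx.2 hb.2⟩
    have hcont : ContinuousOn L (Set.Icc a b) := fun x hx =>
      ((key x (hsub hx)).continuousAt).continuousWithinAt
    have hder : ∀ x ∈ Set.Ico a b, HasDerivWithinAt L 0 (Set.Ici x) x := fun x hx =>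
      (key x (hsub ⟨hx.1, le_of_lt hx.2⟩)).hasDerivWithinAt
    exact constant_of_has_deriv_right_zero hcont hder b (Set.right_mem_Icc.2 hab)
  intro t ht s hs
  show L t = L s
  rcases le_total t s with h | h
  · exact (const t ht s hs h).symm
  · exact const s hs t ht h
end

section
/- Suppose ξ_1, ξ_2, ξ_3 are nonzero reals and w_12, w_13, w_23 are positive reals (interpreted as pairwise distances) satisfying H = 0 and L = 0, i.e. ξ_1 ξ_2 w_12^(α−2) + ξ_1 ξ_3 w_13^(α−2) + ξ_2 ξ_3 w_23^(α−2) = 0 and ξ_1 ξ_2 w_12^2 + ξ_1 ξ_3 w_13^2 + ξ_2 ξ_3 w_23^2 = 0. Then ξ_1 (w_13^(α−4) − w_12^(α−4)) / w_23^2 = ξ_2 (w_12^(α−4) − w_23^(α−4)) / w_13^2. -/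
/-- With `a, b, c` standing for the `w ^ (α - 4)` and `p, q, r` for the `w ^ 2`, subtracting `a` times
the moment relation from the energy relation leaves `z` times the difference of the two sides. -/
lemma mul_sub_mul_eq_of_weighted_sums_eq_zero {x y z a b c p q r : ℝ} (hz : z ≠ 0)
    (hH : x * y * (a * p) + x * z * (b * q) + y * z * (c * r) = 0)
    (hL : x * y * p + x * z * q + y * z * r = 0) :
    x * (b - a) * q = y * (a - c) * r := by
  have h : z * (x * (b - a) * q - y * (a - c) * r) = 0 := by
    linear_combination hH - a * hL
  exact sub_eq_zero.mp ((mul_eq_zero.mp h).resolve_left hz)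

lemma Real.rpow_sub_two_eq_rpow_sub_four_mul_sq {w : ℝ} (hw : w ≠ 0) (α : ℝ) :
    w ^ (α - 2) = w ^ (α - 4) * w ^ 2 := by
  rw [← Real.rpow_add_natCast hw]
  congr 1
  push_cast
  ring

theorem stmt_13_general (α : ℝ) (ξ₁ ξ₂ ξ₃ w₁₂ w₁₃ w₂₃ : ℝ)
    (hξ₃ : ξ₃ ≠ 0)
    (hw₁₂ : 0 < w₁₂) (hw₁₃ : 0 < w₁₃) (hw₂₃ : 0 < w₂₃)
    (hH : ξ₁ * ξ₂ * w₁₂ ^ (α - 2) + ξ₁ * ξ₃ * w₁₃ ^ (α - 2) + ξ₂ * ξ₃ * w₂₃ ^ (α - 2) = 0)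
    (hL : ξ₁ * ξ₂ * w₁₂ ^ 2 + ξ₁ * ξ₃ * w₁₃ ^ 2 + ξ₂ * ξ₃ * w₂₃ ^ 2 = 0) :
    ξ₁ * (w₁₃ ^ (α - 4) - w₁₂ ^ (α - 4)) / w₂₃ ^ 2
      = ξ₂ * (w₁₂ ^ (α - 4) - w₂₃ ^ (α - 4)) / w₁₃ ^ 2 := by
  simp only [Real.rpow_sub_two_eq_rpow_sub_four_mul_sq hw₁₂.ne',
    Real.rpow_sub_two_eq_rpow_sub_four_mul_sq hw₁₃.ne',
    Real.rpow_sub_two_eq_rpow_sub_four_mul_sq hw₂₃.ne'] at hH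
  rw [div_eq_div_iff (by positivity) (by positivity)]
  exact mul_sub_mul_eq_of_weighted_sums_eq_zero hξ₃ hH hL

theorem stmt_13 (α : ℝ) (ξ₁ ξ₂ ξ₃ w₁₂ w₁₃ w₂₃ : ℝ)
    (hξ₁ : ξ₁ ≠ 0) (hξ₂ : ξ₂ ≠ 0) (hξ₃ : ξ₃ ≠ 0)
    (hw₁₂ : 0 < w₁₂) (hw₁₃ : 0 < w₁₃) (hw₂₃ : 0 < w₂₃)
    (hH : ξ₁ * ξ₂ * w₁₂ ^ (α - 2) + ξ₁ * ξ₃ * w₁₃ ^ (α - 2) + ξ₂ * ξ₃ * w₂₃ ^ (α - 2) = 0)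
    (hL : ξ₁ * ξ₂ * w₁₂ ^ 2 + ξ₁ * ξ₃ * w₁₃ ^ 2 + ξ₂ * ξ₃ * w₂₃ ^ 2 = 0) :
    ξ₁ * (w₁₃ ^ (α - 4) - w₁₂ ^ (α - 4)) / w₂₃ ^ 2
      = ξ₂ * (w₁₂ ^ (α - 4) - w₂₃ ^ (α - 4)) / w₁₃ ^ 2 :=
  stmt_13_general α ξ₁ ξ₂ ξ₃ w₁₂ w₁₃ w₂₃ hξ₃ hw₁₂ hw₁₃ hw₂₃ hH hL
end

section
/- Let a > 0, b ∈ ℝ, and let L be the 4×4 complex matrix with rows (−a−ib, 0, L_13, L_14), (0, −a−ib, L_23, L_24), (conj(L_13), conj(L_14), −a+ib, 0), (conj(L_23), conj(L_24), 0, −a+ib). Then the characteristic polynomial of L, evaluated at λ = −a + iμ with μ ∈ ℝ, equals μ^4 + (c_1 − 2b^2)μ^2 + (b^4 − b^2 c_1 + c_2), where c_1 = L_23·conj(L_14) + |L_24|^2 + |L_13|^2 + L_14·conj(L_23) and c_2 = |L_13|^2|L_24|^2 + |L_23|^2|L_14|^2 − L_14 conj(L_13) L_23 conj(L_24) − L_13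 conj(L_14) L_24 conj(L_23). -/
/-!
Write `L` in 2×2 blocks as `[[α, B], [conj B, conj α]]` with `α = -a - i b`. At `λ = -a + i μ` the
diagonal blocks of `λ - L` are the scalars `i (μ + b)` and `i (μ - b)`, whose product is
`b² - μ²`. A Schur complement then gives `(b² - μ²)² - (b² - μ²) tr (B conj B) + |det B|²`, and
`c₁ = tr (B conj B)`, `c₂ = |det B|²`.
-/

open Complex

/-- The Schur complement `det (p q - B C) = (p q)² - p q · tr (B C) + det B · det C`
for the blocks `B = !![u, v; w, z]`, `C = !![u', v'; w', z']`. -/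
theorem Matrix.det_fin_four_of_scalar_diagonal_blocks {R : Type*} [CommRing R]
    (p q u v w z u' v' w' z' : R) :
    !![p, 0, u, v; 0, p, w, z; u', v', q, 0; w', z', 0, q].det
      = (p * q) ^ 2 - p * q * (u * u' + v * w' + w * v' + z * z')
        + (u * z - v * w) * (u' * z' - v' * w') := by
  eval_det
  ring

theorem stmt_17_general (a b : ℝ) (L₁₃ L₁₄ L₂₃ L₂₄ : ℂ)
    (L : Matrix (Fin 4) (Fin 4) ℂ)
    (hL : L = !![(-a : ℂ) - I * b, 0, L₁₃, L₁₄;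
                 0, (-a : ℂ) - I * b, L₂₃, L₂₄;
                 starRingEnd ℂ L₁₃, starRingEnd ℂ L₁₄, (-a : ℂ) + I * b, 0;
                 starRingEnd ℂ L₂₃, starRingEnd ℂ L₂₄, 0, (-a : ℂ) + I * b])
    (c₁ c₂ : ℂ)
    (hc₁ : c₁ = L₂₃ * starRingEnd ℂ L₁₄ + (‖L₂₄‖ : ℂ) ^ 2
      + (‖L₁₃‖ : ℂ) ^ 2 + L₁₄ * starRingEnd ℂ L₂₃)
    (hc₂ : c₂ = (‖L₁₃‖ : ℂ) ^ 2 * (‖L₂₄‖ : ℂ) ^ 2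
      + (‖L₂₃‖ : ℂ) ^ 2 * (‖L₁₄‖ : ℂ) ^ 2
      - L₁₄ * starRingEnd ℂ L₁₃ * L₂₃ * starRingEnd ℂ L₂₄
      - L₁₃ * starRingEnd ℂ L₁₄ * L₂₄ * starRingEnd ℂ L₂₃) :
    ∀ μ : ℝ,
      (Matrix.charpoly L).eval ((-a : ℂ) + I * μ)
        = (μ : ℂ) ^ 4 + (c₁ - 2 * (b : ℂ) ^ 2) * (μ : ℂ) ^ 2
          + ((b : ℂ) ^ 4 - (b : ℂ) ^ 2 * c₁ + c₂) := by
  intro μ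
  have hsub : Matrix.scalar (Fin 4) ((-a : ℂ) + I * μ) - L
      = !![I * (μ + b), 0, -L₁₃, -L₁₄;
           0, I * (μ + b), -L₂₃, -L₂₄;
           -starRingEnd ℂ L₁₃, -starRingEnd ℂ L₁₄, I * (μ - b), 0;
           -starRingEnd ℂ L₂₃, -starRingEnd ℂ L₂₄, 0, I * (μ - b)] := by
    subst hL
    ext i j
    fin_cases i <;> fin_cases j <;> simp <;> ring
  have hpq : I * (μ + b) * (I * (μ - b)) = (b : ℂ) ^ 2 - (μ : ℂ) ^ 2 := by
    linear_combination ((μ : ℂ) ^ 2 - (b : ℂ) ^ 2) * I_sq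
  rw [Matrix.eval_charpoly, hsub, Matrix.det_fin_four_of_scalar_diagonal_blocks, hpq, hc₁, hc₂]
  simp only [← mul_conj']
  ring

theorem stmt_17 (a b : ℝ) (ha : 0 < a) (L₁₃ L₁₄ L₂₃ L₂₄ : ℂ)
    (L : Matrix (Fin 4) (Fin 4) ℂ)
    (hL : L = !![(-a : ℂ) - I * b, 0, L₁₃, L₁₄;
                 0, (-a : ℂ) - I * b, L₂₃, L₂₄;
                 starRingEnd ℂ L₁₃, starRingEnd ℂ L₁₄, (-a : ℂ) + I * b, 0;
                 starRingEnd ℂ L₂₃, starRingEnd ℂ L₂₄, 0, (-a : ℂ) + I * b])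
    (c₁ c₂ : ℂ)
    (hc₁ : c₁ = L₂₃ * starRingEnd ℂ L₁₄ + (‖L₂₄‖ : ℂ) ^ 2
      + (‖L₁₃‖ : ℂ) ^ 2 + L₁₄ * starRingEnd ℂ L₂₃)
    (hc₂ : c₂ = (‖L₁₃‖ : ℂ) ^ 2 * (‖L₂₄‖ : ℂ) ^ 2
      + (‖L₂₃‖ : ℂ) ^ 2 * (‖L₁₄‖ : ℂ) ^ 2
      - L₁₄ * starRingEnd ℂ L₁₃ * L₂₃ * starRingEnd ℂ L₂₄
      - L₁₃ * starRingEnd ℂ L₁₄ * L₂₄ * starRingEnd ℂ L₂₃) :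
    ∀ μ : ℝ,
      (Matrix.charpoly L).eval ((-a : ℂ) + I * μ)
        = (μ : ℂ) ^ 4 + (c₁ - 2 * (b : ℂ) ^ 2) * (μ : ℂ) ^ 2
          + ((b : ℂ) ^ 4 - (b : ℂ) ^ 2 * c₁ + c₂) :=
  stmt_17_general a b L₁₃ L₁₄ L₂₃ L₂₄ L hL c₁ c₂ hc₁ hc₂
end

section
/- With x = 0.70190 (exactly), the unique real root y of the cubic y^3 + ((x^3 − 1)/x)·y − 1 = 0 satisfies 1.3035 < y < 1.3036; moreover this pair (x, y) satisfies 0 < x < 1, y > 1 − x, and 4y^2 > (x^2 − y^2 − 1)^2. -/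
open Set

/-- `4 p ^ 3 + 27 q ^ 2` is minus the discriminant. Two distinct roots `y, z` would force
`p = -(y ^ 2 + y z + z ^ 2)` and `q = -y z (y + z)`, and then
`4 p ^ 3 + 27 q ^ 2 = -((y - z) (2 y + z) (y + 2 z)) ^ 2 ≤ 0`. -/
theorem eq_of_depressed_cubic_eq_zero {R : Type*} [CommRing R] [LinearOrder R]
    [IsStrictOrderedRing R] {p q y z : R} (hdisc : 0 < 4 * p ^ 3 + 27 * q ^ 2)
    (hy : y ^ 3 + p * y - q = 0) (hz : z ^ 3 + p * z - q = 0) : y = z := by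
  by_contra hne
  have hp : p = -(y ^ 2 + y * z + z ^ 2) := by
    have h : (y - z) * (y ^ 2 + y * z + z ^ 2 + p) = 0 := by linear_combination hy - hz
    linear_combination (mul_eq_zero.mp h).resolve_left (sub_ne_zero.mpr hne)
  have hq : q = -(y * z * (y + z)) := by linear_combination -hy + y * hp
  have hdisc_eq : 4 * p ^ 3 + 27 * q ^ 2 = -((y - z) * (2 * y + z) * (y + 2 * z)) ^ 2 := by
    rw [hp, hq]; ring
  linarith [sq_nonneg ((y - z) * (2 * y + z) * (y + 2 * z))]

theorem stmt_19 (x : ℝ) (hx : x = 0.70190) :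
    (∃! y : ℝ, y ^ 3 + ((x ^ 3 - 1) / x) * y - 1 = 0) ∧
    ∀ y : ℝ, y ^ 3 + ((x ^ 3 - 1) / x) * y - 1 = 0 →
      1.3035 < y ∧ y < 1.3036 ∧ 0 < x ∧ x < 1 ∧ y > 1 - x ∧
        4 * y ^ 2 > (x ^ 2 - y ^ 2 - 1) ^ 2 := by
  subst hx
  have hdisc : 0 < 4 * (((0.70190 : ℝ) ^ 3 - 1) / 0.70190) ^ 3 + 27 * 1 ^ 2 := by norm_num
  obtain ⟨y₀, ⟨hlo, hhi⟩, hy₀⟩ : ∃ y ∈ Ioo (1.3035 : ℝ) 1.3036,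
      y ^ 3 + (((0.70190 : ℝ) ^ 3 - 1) / 0.70190) * y - 1 = 0 :=
    intermediate_value_Ioo (by norm_num) (by fun_prop) (by norm_num)
  have hroot : ∀ y : ℝ, y ^ 3 + (((0.70190 : ℝ) ^ 3 - 1) / 0.70190) * y - 1 = 0 → y = y₀ :=
    fun y hy => eq_of_depressed_cubic_eq_zero hdisc hy hy₀
  refine ⟨⟨y₀, hy₀, hroot⟩, fun y hy => ?_⟩
  obtain rfl := hroot y hy
  refine ⟨hlo, hhi, by norm_num, by norm_num, by linarith, ?_⟩
  nlinarith [sq_nonneg (y - 1.3035), sq_nonneg (y - 1.3036)]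
end
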